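/- The extended simulation map is stable: f_I(R_i) ⊆ R_{i+1} for all i ∈ {1,...,n}, f_I(R_0) ⊆ R_1, and f_I(R_{n+1}) ⊆ R_{n+1}. -/

import Mathlib

noncomputable section

def pp (n : ℕ) : ℕ := Nat.clog 2 (n + 2)
def ww (B : ℕ) : ℕ := Nat.clog 2 (B + 2)
def qq (n B : ℕ) : ℕ := pp n + ww B + 1

def tp (n : ℕ) : ℝ := (2 : ℝ) ^ (-(pp n : ℤ))
def tp1 (n : ℕ) : ℝ := (2 : ℝ) ^ (-(pp n : ℤ) - 1)
def tq (n B : ℕ) : ℝ := (2 : ℝ) ^ (-(qq n B : ℤ))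
def bI (k : ℤ) : ℝ := (5 : ℝ) ^ (-k)

def TI (n B : ℕ) (A : ℕ → ℕ) (c : ℕ × ℕ × (ℕ → ℕ)) : ℕ × ℕ × (ℕ → ℕ) :=
  if c.1 = n + 1 then c
  else (c.1 + 1, min (B + 1) (c.2.1 + c.2.2 c.1 * A c.1), c.2.2)

def enc (n B : ℕ) (c : ℕ × ℕ × (ℕ → ℕ)) : ℝ × ℝ :=
  ((c.1 : ℝ) * tp n + (c.2.1 : ℝ) * tq n B,
   bI ((n : ℤ) + 1) + ∑ j ∈ Finset.Icc c.1 n, ((3 * c.2.2 j + 1 : ℕ) : ℝ) * bI (j : ℤ))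

def inR0 (n : ℕ) (x : ℝ × ℝ) : Prop :=
  0 ≤ x.1 ∧ x.1 ≤ tp1 n ∧ 0 ≤ x.2 ∧ x.2 ≤ 1

def inRi (n i : ℕ) (x : ℝ × ℝ) : Prop :=
  (i : ℝ) * tp n ≤ x.1 ∧ x.1 ≤ (i : ℝ) * tp n + tp1 n ∧ 0 ≤ x.2 ∧ x.2 ≤ bI ((i : ℤ) - 1)

def inRia (n i α : ℕ) (x : ℝ × ℝ) : Prop :=
  (i : ℝ) * tp n ≤ x.1 ∧ x.1 ≤ (i : ℝ) * tp n + tp1 n ∧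
    (α : ℝ) * bI (i : ℤ) ≤ x.2 ∧ x.2 ≤ ((α : ℝ) + 1) * bI (i : ℤ)

def in4lin (n B : ℕ) (A : ℕ → ℕ) (i : ℕ) (x : ℝ × ℝ) : Prop :=
  inRia n i 4 x ∧ x.1 ≤ (i : ℝ) * tp n + ((B : ℝ) + 1 - (A i : ℝ)) * tq n B

def in4sat (n B : ℕ) (A : ℕ → ℕ) (i : ℕ) (x : ℝ × ℝ) : Prop :=
  inRia n i 4 x ∧ (i : ℝ) * tp n + ((B : ℝ) + 1 - (A i : ℝ)) * tq n B ≤ x.1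

def in3lin (n B : ℕ) (A : ℕ → ℕ) (i : ℕ) (x : ℝ × ℝ) : Prop :=
  inRia n i 3 x ∧
    (x.2 * (5 : ℝ) ^ (i : ℤ) - 3) * (tp1 n - ((B : ℝ) + 1 - (A i : ℝ)) * tq n B) ≤
      tp1 n + (i : ℝ) * tp n - x.1

def in3sat (n B : ℕ) (A : ℕ → ℕ) (i : ℕ) (x : ℝ × ℝ) : Prop :=
  inRia n i 3 x ∧
    tp1 n + (i : ℝ) * tp n - x.1 ≤
      (x.2 * (5 : ℝ) ^ (i : ℤ) - 3) * (tp1 n - ((B : ℝ) + 1 - (A i : ℝ)) * tq n B)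

open scoped Classical in
def fI (n B : ℕ) (A : ℕ → ℕ) (x : ℝ × ℝ) : ℝ × ℝ :=
  if inR0 n x then (tp n, x.2)
  else if inRi n (n + 1) x then x
  else if _h : ∃ i, 1 ≤ i ∧ i ≤ n ∧ inRia n i 0 x then (x.1 + tp n, 0)
  else if h : ∃ i, 1 ≤ i ∧ i ≤ n ∧ inRia n i 1 x then
    (x.1 + tp n, x.2 - bI (h.choose : ℤ))
  else if h : ∃ i, 1 ≤ i ∧ i ≤ n ∧ inRia n i 2 x then
    (x.1 + tp n, 3 * bI (h.choose : ℤ) - x.2)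
  else if h : ∃ i, 1 ≤ i ∧ i ≤ n ∧ in3lin n B A i x then
    (x.1 + tp n + (A h.choose : ℝ) * tq n B * (x.2 * (5 : ℝ) ^ (h.choose : ℤ) - 3), 0)
  else if h : ∃ i, 1 ≤ i ∧ i ≤ n ∧ in3sat n B A i x then
    (((h.choose : ℝ) + 3 / 2) * tp n -
      (x.2 * (5 : ℝ) ^ (h.choose : ℤ) - 3) * (tp1 n - ((B : ℝ) + 1) * tq n B), 0)
  else if h : ∃ i, 1 ≤ i ∧ i ≤ n ∧ in4lin n B A i x then
    (x.1 + tp n + (A h.choose : ℝ) * tq n B, x.2 - 4 * bI (h.choose : ℤ))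
  else if h : ∃ i, 1 ≤ i ∧ i ≤ n ∧ in4sat n B A i x then
    (((h.choose : ℝ) + 1) * tp n + ((B : ℝ) + 1) * tq n B, x.2 - 4 * bI (h.choose : ℤ))
  else x

def inRfin (n B : ℕ) (x : ℝ × ℝ) : Prop :=
  ((n : ℝ) + 1) * tp n + (B : ℝ) * tq n B - (2 : ℝ) ^ (-(qq n B : ℤ) - 1) ≤ x.1 ∧
  x.1 ≤ ((n : ℝ) + 1) * tp n + (B : ℝ) * tq n B ∧
  bI ((n : ℤ) + 1) ≤ x.2 ∧ x.2 ≤ 2 * bI ((n : ℤ) + 1)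

end

/-!
Every point of `R_i` (`1 ≤ i ≤ n`) falls into one of the regions on which `fI` is defined by a
formula, and the witness `i` chosen by `fI` is the right one because the columns
`[i·2^{-p}, i·2^{-p} + 2^{-p-1}]` are pairwise disjoint. On each region the formula shifts the
first coordinate by one column and maps the height into `[0, 5^{-i}]`; the only non-trivial
estimate is `(B+1)·2^{-q} ≤ 2^{-p-1}`, which keeps the counter inside the column.
-/

lemma tp_pos (n : ℕ) : 0 < tp n := by unfold tp; positivity

lemma tq_pos (n B : ℕ) : 0 < tq n B := by unfold tq; positivity

lemma bI_pos (k : ℤ) : 0 < bI k := by unfold bI; positivity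

lemma tp1_eq_half (n : ℕ) : tp1 n = tp n / 2 := by
  rw [tp1, tp, zpow_sub₀ two_ne_zero, zpow_one]

lemma tq_mul_two_pow (n B : ℕ) : tq n B * 2 ^ ww B = tp1 n := by
  rw [tq, tp1, ← zpow_natCast, ← zpow_add₀ two_ne_zero, qq]
  congr 1
  push_cast
  ring

lemma succ_mul_tq_le_tp1 (n B : ℕ) : ((B : ℝ) + 1) * tq n B ≤ tp1 n := by
  have hB : (B : ℝ) + 1 ≤ 2 ^ ww B := by
    have := Nat.le_pow_clog one_lt_two (B + 2)
    rw [← ww] at this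
    exact_mod_cast (Nat.le_succ _).trans this
  rw [← tq_mul_two_pow n B, mul_comm _ (2 ^ ww B : ℝ)]
  exact mul_le_mul_of_nonneg_right hB (tq_pos n B).le

lemma bI_sub_one (i : ℕ) : bI ((i : ℤ) - 1) = 5 * bI i := by
  rw [bI, bI, neg_sub, sub_eq_neg_add, zpow_add₀ (by norm_num), zpow_one, mul_comm]

lemma bI_mul_zpow (i : ℕ) : bI i * (5 : ℝ) ^ (i : ℤ) = 1 := by
  rw [bI, zpow_neg, inv_mul_cancel₀ (by positivity)]

lemma eq_of_mem_column {n i j : ℕ} {t : ℝ} (hi : (i : ℝ) * tp n ≤ t)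
    (hi' : t ≤ (i : ℝ) * tp n + tp1 n) (hj : (j : ℝ) * tp n ≤ t)
    (hj' : t ≤ (j : ℝ) * tp n + tp1 n) : j = i := by
  have hp := tp_pos n
  have ht := tp1_eq_half n
  have hji : (j : ℝ) < i + 1 := by nlinarith
  have hij : (i : ℝ) < j + 1 := by nlinarith
  have : j < i + 1 := by exact_mod_cast hji
  have : i < j + 1 := by exact_mod_cast hij
  omega

section Regions

variable {n B : ℕ} {A : ℕ → ℕ} {i : ℕ} {x : ℝ × ℝ}

lemma inRi_succ_of {y : ℝ × ℝ} (h₁ : ((i : ℝ) + 1) * tp n ≤ y.1)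
    (h₂ : y.1 ≤ ((i : ℝ) + 1) * tp n + tp1 n) (h₃ : 0 ≤ y.2) (h₄ : y.2 ≤ bI i) :
    inRi n (i + 1) y := by
  refine ⟨by push_cast; exact h₁, by push_cast; exact h₂, h₃, ?_⟩
  rwa [show ((i + 1 : ℕ) : ℤ) - 1 = i by push_cast; ring]

lemma inRia_scaled_height {α : ℕ} (h : inRia n i α x) :
    (α : ℝ) ≤ x.2 * 5 ^ (i : ℤ) ∧ x.2 * 5 ^ (i : ℤ) ≤ α + 1 := by
  have h5 : (0 : ℝ) < 5 ^ (i : ℤ) := by positivity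
  have hb := bI_mul_zpow i
  obtain ⟨-, -, hlo, hhi⟩ := h
  constructor <;> nlinarith

lemma inRi_succ_band0 (hx : inRi n i x) : inRi n (i + 1) (x.1 + tp n, 0) := by
  obtain ⟨hx₁, hx₂, -, -⟩ := hx
  exact inRi_succ_of (by dsimp only; linarith) (by dsimp only; linarith) le_rfl (bI_pos i).le

lemma inRi_succ_band1 (hx : inRia n i 1 x) : inRi n (i + 1) (x.1 + tp n, x.2 - bI i) := by
  obtain ⟨hx₁, hx₂, hlo, hhi⟩ := hx
  push_cast at hlo hhi
  exact inRi_succ_of (by dsimp only; linarith) (by dsimp only; linarith) (by dsimp only; linarith)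
    (by dsimp only; linarith)

lemma inRi_succ_band2 (hx : inRia n i 2 x) : inRi n (i + 1) (x.1 + tp n, 3 * bI i - x.2) := by
  obtain ⟨hx₁, hx₂, hlo, hhi⟩ := hx
  push_cast at hlo hhi
  exact inRi_succ_of (by dsimp only; linarith) (by dsimp only; linarith) (by dsimp only; linarith)
    (by dsimp only; linarith)

lemma inRi_succ_band3_lin (hx : in3lin n B A i x) :
    inRi n (i + 1) (x.1 + tp n + (A i : ℝ) * tq n B * (x.2 * 5 ^ (i : ℤ) - 3), 0) := by
  obtain ⟨hband, hlin⟩ := hx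
  obtain ⟨hs₃, -⟩ := inRia_scaled_height hband
  obtain ⟨hx₁, hx₂, -, -⟩ := hband
  have hs : (0 : ℝ) ≤ x.2 * 5 ^ (i : ℤ) - 3 := by push_cast at hs₃; linarith
  have hAq : (0 : ℝ) ≤ A i * tq n B := mul_nonneg (Nat.cast_nonneg _) (tq_pos n B).le
  have hgap : 0 ≤ tp1 n - ((B : ℝ) + 1) * tq n B := sub_nonneg.2 (succ_mul_tq_le_tp1 n B)
  refine inRi_succ_of ?_ ?_ le_rfl (bI_pos i).le <;> dsimp only
  · nlinarith [mul_nonneg hAq hs]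
  · nlinarith [mul_nonneg hs hgap]

lemma inRi_succ_band3_sat (hx : in3sat n B A i x) :
    inRi n (i + 1) (((i : ℝ) + 3 / 2) * tp n -
      (x.2 * 5 ^ (i : ℤ) - 3) * (tp1 n - ((B : ℝ) + 1) * tq n B), 0) := by
  obtain ⟨hs₀, hs₁⟩ := inRia_scaled_height hx.1
  push_cast at hs₀ hs₁
  have hgap : 0 ≤ tp1 n - ((B : ℝ) + 1) * tq n B := sub_nonneg.2 (succ_mul_tq_le_tp1 n B)
  have hBq : (0 : ℝ) ≤ ((B : ℝ) + 1) * tq n B := by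
    have := tq_pos n B; positivity
  have ht := tp1_eq_half n
  refine inRi_succ_of ?_ ?_ le_rfl (bI_pos i).le <;> dsimp only
  · nlinarith [mul_le_mul_of_nonneg_right (by linarith : x.2 * 5 ^ (i : ℤ) - 3 ≤ 1) hgap]
  · nlinarith [mul_nonneg (by linarith : (0 : ℝ) ≤ x.2 * 5 ^ (i : ℤ) - 3) hgap]

lemma inRi_succ_band4_lin (hx : in4lin n B A i x) :
    inRi n (i + 1) (x.1 + tp n + (A i : ℝ) * tq n B, x.2 - 4 * bI i) := by
  obtain ⟨⟨hx₁, -, hlo, hhi⟩, hlin⟩ := hx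
  push_cast at hlo hhi
  have hAq : (0 : ℝ) ≤ A i * tq n B := mul_nonneg (Nat.cast_nonneg _) (tq_pos n B).le
  have hkey := succ_mul_tq_le_tp1 n B
  exact inRi_succ_of (by dsimp only; linarith) (by dsimp only; linarith) (by dsimp only; linarith)
    (by dsimp only; linarith)

lemma inRi_succ_band4_sat (hx : inRia n i 4 x) :
    inRi n (i + 1) (((i : ℝ) + 1) * tp n + ((B : ℝ) + 1) * tq n B, x.2 - 4 * bI i) := by
  obtain ⟨-, -, hlo, hhi⟩ := hx
  push_cast at hlo hhi
  have hBq : (0 : ℝ) ≤ ((B : ℝ) + 1) * tq n B := by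
    have := tq_pos n B; positivity
  have hkey := succ_mul_tq_le_tp1 n B
  exact inRi_succ_of (by dsimp only; linarith) (by dsimp only; linarith) (by dsimp only; linarith)
    (by dsimp only; linarith)

lemma inRi_regions_cover (hx : inRi n i x) :
    inRia n i 0 x ∨ inRia n i 1 x ∨ inRia n i 2 x ∨ in3lin n B A i x ∨ in3sat n B A i x ∨
      in4lin n B A i x ∨ in4sat n B A i x := by
  obtain ⟨hx₁, hx₂, hy₀, hy₁⟩ := hx
  rw [bI_sub_one] at hy₁
  have band : ∀ α : ℕ, (α : ℝ) * bI i ≤ x.2 → x.2 ≤ (α + 1) * bI i → inRia n i α x :=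
    fun α hlo hhi => ⟨hx₁, hx₂, hlo, hhi⟩
  rcases le_total x.2 (bI i) with h | h₀
  · exact Or.inl (band 0 (by simpa using hy₀) (by simpa using h))
  rcases le_total x.2 (2 * bI i) with h | h₁
  · exact Or.inr <| Or.inl (band 1 (by simpa using h₀) (by norm_num; linarith))
  rcases le_total x.2 (3 * bI i) with h | h₂
  · exact Or.inr <| Or.inr <| Or.inl (band 2 (by norm_num; linarith) (by norm_num; linarith))
  rcases le_total x.2 (4 * bI i) with h | h₃
  · have h3 := band 3 (by norm_num; linarith) (by norm_num; linarith)
    rcases le_total ((x.2 * 5 ^ (i : ℤ) - 3) * (tp1 n - ((B : ℝ) + 1 - A i) * tq n B))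
        (tp1 n + i * tp n - x.1) with h | h
    · exact Or.inr <| Or.inr <| Or.inr <| Or.inl ⟨h3, h⟩
    · exact Or.inr <| Or.inr <| Or.inr <| Or.inr <| Or.inl ⟨h3, h⟩
  · have h4 := band 4 (by norm_num; linarith) (by norm_num; linarith)
    rcases le_total x.1 (i * tp n + ((B : ℝ) + 1 - A i) * tq n B) with h | h
    · exact Or.inr <| Or.inr <| Or.inr <| Or.inr <| Or.inr <| Or.inl ⟨h4, h⟩
    · exact Or.inr <| Or.inr <| Or.inr <| Or.inr <| Or.inr <| Or.inr ⟨h4, h⟩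

lemma inRi_succ_fI (hi : 1 ≤ i) (hin : i ≤ n) (hx : inRi n i x) :
    inRi n (i + 1) (fI n B A x) := by
  have col {j : ℕ} (hj : (j : ℝ) * tp n ≤ x.1) (hj' : x.1 ≤ j * tp n + tp1 n) : j = i :=
    eq_of_mem_column hx.1 hx.2.1 hj hj'
  have hR0 : ¬ inR0 n x := fun h => by
    have := col (j := 0) (by simpa using h.1) (by simpa using h.2.1)
    omega
  have hlast : ¬ inRi n (n + 1) x := fun h => by
    have := col h.1 h.2.1
    omega
  rw [fI, if_neg hR0, if_neg hlast]
  split_ifs with h0 h1 h2 h3 h4 h5 h6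
  · exact inRi_succ_band0 hx
  · obtain ⟨-, -, hj⟩ := h1.choose_spec
    obtain rfl := col hj.1 hj.2.1
    exact inRi_succ_band1 hj
  · obtain ⟨-, -, hj⟩ := h2.choose_spec
    obtain rfl := col hj.1 hj.2.1
    exact inRi_succ_band2 hj
  · obtain ⟨-, -, hj⟩ := h3.choose_spec
    obtain rfl := col hj.1.1 hj.1.2.1
    exact inRi_succ_band3_lin hj
  · obtain ⟨-, -, hj⟩ := h4.choose_spec
    obtain rfl := col hj.1.1 hj.1.2.1
    exact inRi_succ_band3_sat hj
  · obtain ⟨-, -, hj⟩ := h5.choose_spec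
    obtain rfl := col hj.1.1 hj.1.2.1
    exact inRi_succ_band4_lin hj
  · obtain ⟨-, -, hj⟩ := h6.choose_spec
    obtain rfl := col hj.1.1 hj.1.2.1
    exact inRi_succ_band4_sat hj.1
  · exfalso
    rcases inRi_regions_cover (B := B) (A := A) hx with h | h | h | h | h | h | h
    exacts [h0 ⟨i, hi, hin, h⟩, h1 ⟨i, hi, hin, h⟩, h2 ⟨i, hi, hin, h⟩, h3 ⟨i, hi, hin, h⟩,
      h4 ⟨i, hi, hin, h⟩, h5 ⟨i, hi, hin, h⟩, h6 ⟨i, hi, hin, h⟩]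

lemma inRi_one_of_inR0 (hx : inR0 n x) : inRi n 1 (fI n B A x) := by
  rw [fI, if_pos hx]
  obtain ⟨-, -, hy₀, hy₁⟩ := hx
  have := tp1_eq_half n
  have := tp_pos n
  refine ⟨by simp, by simp; linarith, hy₀, by simpa [bI] using hy₁⟩

lemma fI_of_inRi_last (hx : inRi n (n + 1) x) : fI n B A x = x := by
  have hR0 : ¬ inR0 n x := fun h => by
    have := eq_of_mem_column hx.1 hx.2.1 (j := 0) (by simpa using h.1) (by simpa using h.2.1)
    omega
  rw [fI, if_neg hR0, if_pos hx]

end Regions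

theorem simulation_stable_general (n B : ℕ) (A : ℕ → ℕ) :
    (∀ i, 1 ≤ i → i ≤ n → ∀ x, inRi n i x → inRi n (i + 1) (fI n B A x)) ∧
    (∀ x, inR0 n x → inRi n 1 (fI n B A x)) ∧
    (∀ x, inRi n (n + 1) x → inRi n (n + 1) (fI n B A x)) :=
  ⟨fun _ hi hin _ hx => inRi_succ_fI hi hin hx, fun _ hx => inRi_one_of_inR0 hx,
    fun _ hx => (fI_of_inRi_last hx).symm ▸ hx⟩

theorem simulation_stable (n B : ℕ) (A : ℕ → ℕ) (hA : ∀ j, A j ≤ B) :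
    (∀ i, 1 ≤ i → i ≤ n → ∀ x, inRi n i x → inRi n (i + 1) (fI n B A x)) ∧
    (∀ x, inR0 n x → inRi n 1 (fI n B A x)) ∧
    (∀ x, inRi n (n + 1) x → inRi n (n + 1) (fI n B A x)) :=
  simulation_stable_general n B A
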